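/- arXiv:2304.11932 — 2 statements merged into one kernel-verified Lean document; each statement's English description precedes it below -/
import Mathlib

section
/- Let u and u' be two conjugate words over a finite alphabet A. Then ι(u) − 1 ≤ ι(u') ≤ ι(u) + 1. -/
/-!
Write `u = v·w` and `m = ι(v)`, and fix a word `y` of length `m + 1` that is not a subword of `v`.
If `ι(u) = k`, a word `x` of length `k - 1` longer than `m` splits as `x = x₁·x₂` with `|x₂| = m`.
Then `y·x₁` has length `k`, so it embeds into `v·w`; since `y` does not fit into `v`, the part `x₁`
must embed into `w`, while `x₂` embeds into `v`. Hence `x ≼ w·v`, i.e. `ι(w·v) ≥ ι(v·w) - 1`, and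
exchanging `v` and `w` gives the other inequality.
-/

/-- The subword universality index `ι(u)`: the largest `k` such that every word of
length `k` over the alphabet `A` is a subword (subsequence) of `u`. -/
noncomputable def univIndex {A : Type*} (u : List A) : ℕ :=
  sSup {k : ℕ | ∀ w : List A, w.length = k → w.Sublist u}

namespace List

theorem Sublist.of_append_of_not_sublist {A : Type*} {y x v w : List A}
    (h : (y ++ x).Sublist (v ++ w)) (hy : ¬ y.Sublist v) : x.Sublist w := by
  obtain ⟨l₁, l₂, heq, h₁, h₂⟩ := sublist_append_iff.mp h
  rcases append_eq_append_iff.mp heq with ⟨a, rfl, -⟩ | ⟨c, -, rfl⟩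
  · exact absurd ((sublist_append_left y a).trans h₁) hy
  · exact (sublist_append_right c x).trans h₂

end List

section UnivIndex

variable {A : Type*} [Nonempty A]

theorem bddAbove_univLengths (u : List A) :
    BddAbove {k : ℕ | ∀ w : List A, w.length = k → w.Sublist u} := by
  obtain ⟨a⟩ := ‹Nonempty A›
  refine ⟨u.length, fun k hk => ?_⟩
  simpa using (hk (List.replicate k a) List.length_replicate).length_le

theorem le_univIndex {u : List A} {k : ℕ} (h : ∀ w : List A, w.length = k → w.Sublist u) :
    k ≤ univIndex u :=
  le_csSup (bddAbove_univLengths u) h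

theorem exists_length_eq_univIndex_add_one_not_sublist (u : List A) :
    ∃ y : List A, y.length = univIndex u + 1 ∧ ¬ y.Sublist u := by
  by_contra! h
  exact (le_univIndex h).not_gt (Nat.lt_succ_self _)

theorem sublist_of_length_le_univIndex {u w : List A} (hw : w.length ≤ univIndex u) :
    w.Sublist u := by
  obtain ⟨a⟩ := ‹Nonempty A›
  have hmem : univIndex u ∈ {k : ℕ | ∀ w : List A, w.length = k → w.Sublist u} :=
    Nat.sSup_mem ⟨0, fun w hw => by simp [List.length_eq_zero_iff.mp hw]⟩ (bddAbove_univLengths u)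
  refine (List.sublist_append_left w (List.replicate (univIndex u - w.length) a)).trans ?_
  exact hmem _ (by simp only [List.length_append, List.length_replicate]; omega)

theorem univIndex_append_sub_one_le (v w : List A) :
    univIndex (v ++ w) - 1 ≤ univIndex (w ++ v) := by
  refine le_univIndex fun x hx => ?_
  obtain ⟨y, hy, hyv⟩ := exists_length_eq_univIndex_add_one_not_sublist v
  by_cases hxv : x.length ≤ univIndex v
  · exact (sublist_of_length_le_univIndex hxv).trans (List.sublist_append_right w v)
  rw [← List.take_append_drop (x.length - univIndex v) x]
  refine List.Sublist.append ?_ (sublist_of_length_le_univIndex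
    (by simp only [List.length_drop]; omega))
  refine (sublist_of_length_le_univIndex ?_).of_append_of_not_sublist hyv
  simp only [List.length_append, List.length_take, hy]
  omega

end UnivIndex

theorem univIndex_conjugate_general {A : Type*} [Nonempty A] (u u' v w : List A)
    (hu : u = v ++ w) (hu' : u' = w ++ v) :
    univIndex u - 1 ≤ univIndex u' ∧ univIndex u' ≤ univIndex u + 1 := by
  subst hu hu'
  have := univIndex_append_sub_one_le w v
  exact ⟨univIndex_append_sub_one_le v w, by omega⟩

/-- For conjugate words `u = v·w` and `u' = w·v`: `ι(u) − 1 ≤ ι(u') ≤ ι(u) + 1`. -/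
theorem univIndex_conjugate {A : Type*} [Fintype A] [Nonempty A] (u u' v w : List A)
    (hu : u = v ++ w) (hu' : u' = w ++ v) :
    univIndex u - 1 ≤ univIndex u' ∧ univIndex u' ≤ univIndex u + 1 :=
  univIndex_conjugate_general u u' v w hu hu'
end

section
/- For every word u over a finite alphabet A, if the rest r(u) of the arch factorization of u is the empty word, then ζ(u) = ι(u). -/
/-- The circular subword universality index `ζ(u)`: the maximum of `ι(u')` over all
conjugates `u'` of `u` (equivalently, over all rotations of `u`). -/
noncomputable def circIndex {A : Type*} (u : List A) : ℕ :=
  (Finset.range (u.length + 1)).sup fun i => univIndex (u.drop i ++ u.take i)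

open Classical in
/-- The arch-jumping function `α` of a word `w`: `α(i)` is the least `j` such that the
factor `w(i,j)` contains every letter of the alphabet `A`, undefined if no such `j` exists. -/
noncomputable def alphaJump {A : Type*} (w : List A) (i : ℕ) : Option ℕ :=
  if ∃ j, ∀ a : A, a ∈ (w.take j).drop i then
    some (sInf {j : ℕ | ∀ a : A, a ∈ (w.take j).drop i})
  else none

/-- `αⁿ(i)`: the `n`-fold iteration of the arch-jumping function `α` of `w`, starting
from position `i`; `none` if some intermediate step is undefined. -/
noncomputable def alphaIter {A : Type*} (w : List A) (n i : ℕ) : Option ℕ :=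
  (fun o => o.bind (alphaJump w))^[n] (some i)

/-- The number of arches in the arch factorization of `w`:
the largest `n` such that `αⁿ(0)` is defined. -/
noncomputable def numArches {A : Type*} (w : List A) : ℕ :=
  sSup {n : ℕ | (alphaIter w n 0).isSome}

/-- The rest `r(w)` of the arch factorization of `w`: the suffix of `w` remaining after
its arches, i.e. after position `α^m(0)` where `m` is the number of arches. -/
noncomputable def archRest {A : Type*} (w : List A) : List A :=
  w.drop ((alphaIter w (numArches w) 0).getD 0)

/-!
Write `u = s₁ ⋯ s_m` as the product of its arches, so that `ι(u) = m`: prepending an arch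
raises `ι` by exactly one, and a word that is not rich has `ι = 0`. A rotation of `u` that
starts inside the arch `s_{j+1}` is a subword of `s_{j+1} ⋯ s_m · s₁ ⋯ s_j · t`, where `t` is
`s_{j+1}` without its last letter and hence not rich; by the same two facts this word has
`ι = m`, and `ι` is monotone under taking subwords.
-/

open List

section

variable {A : Type*}

def IsRich (w : List A) : Prop := ∀ a : A, a ∈ w

/-- An arch: a rich word none of whose proper prefixes is rich. -/
def IsArch (s : List A) : Prop := IsRich s ∧ ¬ IsRich s.dropLast

theorem sublist_of_cons_sublist_append {c : A} {s x v : List A} (hc : c ∉ s.dropLast)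
    (h : (c :: x).Sublist (s ++ v)) : x.Sublist v := by
  rcases s.eq_nil_or_concat' with rfl | ⟨t, e, rfl⟩
  · exact (sublist_cons_self c x).trans h
  · rw [dropLast_concat] at hc
    rw [append_assoc, singleton_append, sublist_append_iff] at h
    obtain ⟨_ | ⟨d, l₁⟩, l₂, hx, ht, hv⟩ := h
    · rw [nil_append] at hx
      exact (hx ▸ hv).of_cons_cons
    · obtain ⟨rfl, -⟩ := cons_eq_cons.1 hx
      exact absurd (ht.subset mem_cons_self) hc

theorem drop_take_append_drop_take (w : List A) {a c b : ℕ} (hac : a ≤ c) (hcb : c ≤ b) :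
    (w.take c).drop a ++ (w.take b).drop c = (w.take b).drop a := by
  rw [drop_take, drop_take, drop_take, show b - a = (c - a) + (b - c) by omega, take_add,
    drop_drop, Nat.add_sub_cancel' hac]

theorem dropLast_drop_take (w : List A) (a : ℕ) {c : ℕ} (hc : c ≤ w.length) :
    ((w.take c).drop a).dropLast = (w.take (c - 1)).drop a := by
  simp only [dropLast_eq_take, drop_take, take_take, length_drop, length_take]
  grind

section Nonempty

variable [Nonempty A]

theorem bddAbove_univIndex_set (w : List A) :
    BddAbove {k : ℕ | ∀ x : List A, x.length = k → x.Sublist w} := by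
  inhabit A
  refine ⟨w.length, fun k hk => ?_⟩
  simpa using (hk (replicate k default) length_replicate).length_le

theorem le_univIndex_iff {w : List A} {k : ℕ} :
    k ≤ univIndex w ↔ ∀ x : List A, x.length = k → x.Sublist w := by
  refine ⟨fun hk x hx => ?_, fun h => le_csSup (bddAbove_univIndex_set w) h⟩
  inhabit A
  have hmem : ∀ y : List A, y.length = univIndex w → y.Sublist w :=
    Nat.sSup_mem ⟨0, fun y hy => by simp [length_eq_zero_iff.1 hy]⟩ (bddAbove_univIndex_set w)
  exact (sublist_append_left x (replicate (univIndex w - k) default)).trans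
    (hmem _ (by simp; omega))

theorem univIndex_mono {v w : List A} (h : v.Sublist w) : univIndex v ≤ univIndex w :=
  le_univIndex_iff.2 fun x hx => (le_univIndex_iff.1 le_rfl x hx).trans h

theorem univIndex_eq_zero_of_not_isRich {t : List A} (ht : ¬ IsRich t) : univIndex t = 0 := by
  obtain ⟨c, hc⟩ := not_forall.1 ht
  by_contra h0
  exact hc (singleton_sublist.1 (le_univIndex_iff.1 (Nat.one_le_iff_ne_zero.2 h0) [c] rfl))

theorem IsArch.univIndex_append {s : List A} (hs : IsArch s) (v : List A) :
    univIndex (s ++ v) = univIndex v + 1 := by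
  refine le_antisymm ?_ (le_univIndex_iff.2 ?_)
  · obtain ⟨c, hc⟩ := not_forall.1 hs.2
    by_contra! h
    have : univIndex v + 1 ≤ univIndex v := le_univIndex_iff.2 fun x hx =>
      sublist_of_cons_sublist_append hc (le_univIndex_iff.1 h (c :: x) (by simp [hx]))
    omega
  · rintro (_ | ⟨c, x⟩) hx
    · simp at hx
    · exact (singleton_sublist.2 (hs.1 c)).append
        (le_univIndex_iff.1 le_rfl x (by simpa using hx))

end Nonempty

theorem alphaJump_spec {w : List A} {a c : ℕ} (h : alphaJump w a = some c) :
    IsRich ((w.take c).drop a) ∧ ∀ b, IsRich ((w.take b).drop a) → c ≤ b := by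
  unfold alphaJump at h
  split_ifs at h with hex
  obtain rfl := Option.some_inj.1 h
  exact ⟨Nat.sInf_mem hex, fun b hb => Nat.sInf_le hb⟩

theorem alphaJump_le_length {w : List A} {a c : ℕ} (h : alphaJump w a = some c) :
    c ≤ w.length := by
  obtain ⟨hrich, hmin⟩ := alphaJump_spec h
  exact (hmin _ (by rwa [← take_eq_take_min])).trans (min_le_right _ _)

theorem lt_of_alphaJump_eq_some [Nonempty A] {w : List A} {a c : ℕ}
    (h : alphaJump w a = some c) : a < c := by
  inhabit A
  have := length_pos_of_mem ((alphaJump_spec h).1 default)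
  simp only [length_drop, length_take] at this
  omega

theorem not_isRich_of_alphaJump_eq_some [Nonempty A] {w : List A} {a c : ℕ}
    (h : alphaJump w a = some c) : ¬ IsRich ((w.take (c - 1)).drop a) := fun hrich => by
  have := (alphaJump_spec h).2 _ hrich
  have := lt_of_alphaJump_eq_some h
  omega

theorem isArch_of_alphaJump_eq_some [Nonempty A] {w : List A} {a c : ℕ}
    (h : alphaJump w a = some c) : IsArch ((w.take c).drop a) := by
  rw [IsArch, dropLast_drop_take w a (alphaJump_le_length h)]
  exact ⟨(alphaJump_spec h).1, not_isRich_of_alphaJump_eq_some h⟩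

theorem alphaIter_succ (w : List A) (k a : ℕ) :
    alphaIter w (k + 1) a = (alphaJump w a).bind (alphaIter w k) := by
  rw [alphaIter, Function.iterate_succ_apply]
  change _^[k] (alphaJump w a) = _
  cases alphaJump w a with
  | none => exact Function.iterate_fixed rfl k
  | some c => rfl

theorem alphaIter_succ_eq_some {w : List A} {k a b : ℕ} :
    alphaIter w (k + 1) a = some b ↔
      ∃ c, alphaJump w a = some c ∧ alphaIter w k c = some b := by
  rw [alphaIter_succ, Option.bind_eq_some_iff]

theorem le_of_alphaIter_eq_some [Nonempty A] {w : List A} {k a b : ℕ}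
    (h : alphaIter w k a = some b) : a ≤ b := by
  induction k generalizing a with
  | zero => exact (Option.some_inj.1 h).le
  | succ k ih =>
    obtain ⟨c, hc, hcb⟩ := alphaIter_succ_eq_some.1 h
    exact (lt_of_alphaJump_eq_some hc).le.trans (ih hcb)

theorem univIndex_drop_take_append_of_alphaIter [Nonempty A] {w : List A} {k a b : ℕ}
    (h : alphaIter w k a = some b) (v : List A) :
    univIndex ((w.take b).drop a ++ v) = k + univIndex v := by
  induction k generalizing a with
  | zero =>
    obtain rfl : a = b := Option.some_inj.1 h
    simp
  | succ k ih =>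
    obtain ⟨c, hc, hcb⟩ := alphaIter_succ_eq_some.1 h
    rw [← drop_take_append_drop_take w (lt_of_alphaJump_eq_some hc).le
        (le_of_alphaIter_eq_some hcb), append_assoc,
      (isArch_of_alphaJump_eq_some hc).univIndex_append, ih hcb]
    omega

theorem exists_alphaJump_straddle {w : List A} {k a b i : ℕ} (h : alphaIter w k a = some b)
    (hai : a ≤ i) (hib : i < b) :
    ∃ j l c d, j + l = k ∧ alphaIter w j a = some c ∧ alphaIter w l c = some b ∧
      alphaJump w c = some d ∧ c ≤ i ∧ i < d := by
  induction k generalizing a with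
  | zero =>
    obtain rfl : a = b := Option.some_inj.1 h
    omega
  | succ k ih =>
    obtain ⟨c, hc, hcb⟩ := alphaIter_succ_eq_some.1 h
    by_cases hic : i < c
    · exact ⟨0, k + 1, a, c, by omega, rfl, h, hc, hai, hic⟩
    · obtain ⟨j, l, c', d, hjl, hj, hl, hd, hc'i, hid⟩ := ih hcb (by omega)
      exact ⟨j + 1, l, c', d, by omega, alphaIter_succ_eq_some.2 ⟨c, hc, hj⟩, hl, hd, hc'i, hid⟩

theorem univIndex_rotation_le_of_alphaIter [Nonempty A] {w : List A} {k a b i : ℕ}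
    (h : alphaIter w k a = some b) (hai : a ≤ i) (hib : i < b) :
    univIndex ((w.take b).drop i ++ (w.take i).drop a) ≤ k := by
  obtain ⟨j, l, c, d, rfl, hj, hl, hd, hci, hid⟩ := exists_alphaJump_straddle h hai hib
  have hsub : ((w.take b).drop i ++ (w.take i).drop a).Sublist
      ((w.take b).drop c ++ ((w.take c).drop a ++ (w.take (d - 1)).drop c)) := by
    rw [← drop_take_append_drop_take w (le_of_alphaIter_eq_some hj) hci]
    exact (drop_sublist_drop_left _ hci).append
      ((Sublist.refl _).append ((take_sublist_take_left (by omega)).drop c))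
  calc _ ≤ _ := univIndex_mono hsub
    _ = l + (j + 0) := by
      rw [univIndex_drop_take_append_of_alphaIter hl, univIndex_drop_take_append_of_alphaIter hj,
        univIndex_eq_zero_of_not_isRich (not_isRich_of_alphaJump_eq_some hd)]
    _ = j + l := by omega

theorem circIndex_eq_univIndex_of_alphaIter [Nonempty A] {u : List A} {k q : ℕ}
    (h : alphaIter u k 0 = some q) (hq : u.length ≤ q) : circIndex u = univIndex u := by
  have hu : univIndex u = k := by
    have hnil : univIndex ([] : List A) = 0 :=
      univIndex_eq_zero_of_not_isRich fun h => not_mem_nil (h (Classical.arbitrary A))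
    simpa [take_of_length_le hq, hnil] using univIndex_drop_take_append_of_alphaIter h []
  refine le_antisymm (Finset.sup_le fun i hi => ?_) ?_
  · rcases Nat.lt_or_ge i u.length with hiu | hiu
    · simpa [take_of_length_le hq, hu] using
        univIndex_rotation_le_of_alphaIter h (Nat.zero_le i) (hiu.trans_le hq)
    · simp [drop_of_length_le hiu, take_of_length_le hiu]
  · simpa [circIndex] using Finset.le_sup (f := fun i => univIndex (u.drop i ++ u.take i))
      (Finset.mem_range.2 (Nat.succ_pos _))

end

theorem circIndex_eq_univIndex_of_rest_nil_general {A : Type*}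
    (u : List A) (hr : archRest u = []) :
    circIndex u = univIndex u := by
  rcases u with _ | ⟨c, w⟩
  · simp [circIndex]
  · have : Nonempty A := ⟨c⟩
    rw [archRest] at hr
    cases h : alphaIter (c :: w) (numArches (c :: w)) 0 with
    | none => simp [h] at hr
    | some q =>
      exact circIndex_eq_univIndex_of_alphaIter h (drop_eq_nil_iff.1 (by simpa [h] using hr))

/-- If the rest `r(u)` of the arch factorization of `u` is empty, then `ζ(u) = ι(u)`. -/
theorem circIndex_eq_univIndex_of_rest_nil {A : Type*} [Fintype A] [Nonempty A]
    (u : List A) (hr : archRest u = []) :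
    circIndex u = univIndex u :=
  circIndex_eq_univIndex_of_rest_nil_general u hr
end
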